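/- Let A = a₀ + 𝐚 + 𝒜 + a₁₂₃I be a multivector in Cl(0,3) with a₊ > 0 and a₋ > 0, and let c₁₊, c₁₋ be any integers. Define the free multivector F = (πc₁₊/a₊)·(1 + I)·(𝐚 + 𝒜) + (πc₁₋/a₋)·(1 - I)·(𝐚 + 𝒜). Then exp F = 1 and F commutes with A, i.e. F·A = A·F. -/

import Mathlib

open Real CliffordAlgebra

noncomputable section

/-- The quadratic form of signature (0,3): `Q(x) = -(x₁² + x₂² + x₃²)`. -/
def Q03 : QuadraticForm ℝ (Fin 3 → ℝ) := QuadraticMap.weightedSumSquares ℝ ![-1, -1, -1]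

/-- The real Clifford algebra Cl(0,3). -/
abbrev Cl03 := CliffordAlgebra Q03

/-- The canonical (module) topology on the finite-dimensional real algebra Cl(0,3). -/
instance : TopologicalSpace Cl03 := moduleTopology ℝ Cl03

/-- The orthonormal generators `e₁, e₂, e₃` (indexed here by `0, 1, 2`). -/
def e (i : Fin 3) : Cl03 := ι Q03 (Pi.single i 1)

/-- The pseudoscalar `I = e₁e₂e₃`. -/
def I3 : Cl03 := e 0 * e 1 * e 2

/-- The exponential `exp M = ∑ₖ Mᵏ/k!` in Cl(0,3). -/
def expCl (M : Cl03) : Cl03 := ∑' n : ℕ, (n.factorial : ℝ)⁻¹ • M ^ n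

/-- `atan2 y x` is the argument in `(-π, π]` of the complex number `x + iy`. -/
def atan2 (y x : ℝ) : ℝ := Complex.arg ⟨x, y⟩

/-! ### Auxiliary material -/

instance : IsModuleTopology ℝ Cl03 := ⟨rfl⟩
instance : ContinuousAdd Cl03 := IsModuleTopology.toContinuousAdd ℝ Cl03

instance : T2Space Cl03 := by
  constructor
  intro x y hxy
  obtain ⟨φ, hφ⟩ : ∃ φ : Module.Dual ℝ Cl03, φ x ≠ φ y := by
    by_contra h
    push_neg at h
    refine hxy (sub_eq_zero.mp ((Module.forall_dual_apply_eq_zero_iff ℝ (x - y)).mp ?_))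
    intro φ
    rw [map_sub, h φ, sub_self]
  exact separated_by_continuous (IsModuleTopology.continuous_of_linearMap φ) hφ

lemma e_sq (i : Fin 3) : e i * e i = -1 := by
  rw [e, ι_sq_scalar]
  have h : Q03 (Pi.single i 1) = -1 := by
    fin_cases i <;>
      simp [Q03, QuadraticMap.weightedSumSquares_apply, Fin.sum_univ_three, Pi.single_apply]
  rw [h, map_neg, map_one]

lemma e_anti {i j : Fin 3} (h : i ≠ j) : e i * e j = -(e j * e i) := by
  have key : e i * e j + e j * e i = 0 := by
    rw [e, e, ι_mul_ι_add_swap]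
    have hp : QuadraticMap.polar Q03 (Pi.single i 1) (Pi.single j 1) = 0 := by
      fin_cases i <;> fin_cases j <;> first
        | exact absurd rfl h
        | simp [QuadraticMap.polar, Q03, QuadraticMap.weightedSumSquares_apply,
            Fin.sum_univ_three, Pi.single_apply]
    rw [hp, map_zero]
  linear_combination (norm := noncomm_ring) key

lemma s0 : e 0 * e 0 = -1 := e_sq 0
lemma s1 : e 1 * e 1 = -1 := e_sq 1
lemma s2 : e 2 * e 2 = -1 := e_sq 2
lemma s0' (x : Cl03) : e 0 * (e 0 * x) = -x := by rw [← mul_assoc, s0, neg_one_mul]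
lemma s1' (x : Cl03) : e 1 * (e 1 * x) = -x := by rw [← mul_assoc, s1, neg_one_mul]
lemma s2' (x : Cl03) : e 2 * (e 2 * x) = -x := by rw [← mul_assoc, s2, neg_one_mul]
lemma w10 : e 1 * e 0 = -(e 0 * e 1) := e_anti (by decide)
lemma w20 : e 2 * e 0 = -(e 0 * e 2) := e_anti (by decide)
lemma w21 : e 2 * e 1 = -(e 1 * e 2) := e_anti (by decide)
lemma w10' (x : Cl03) : e 1 * (e 0 * x) = -(e 0 * (e 1 * x)) := by
  rw [← mul_assoc, w10, neg_mul, mul_assoc]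
lemma w20' (x : Cl03) : e 2 * (e 0 * x) = -(e 0 * (e 2 * x)) := by
  rw [← mul_assoc, w20, neg_mul, mul_assoc]
lemma w21' (x : Cl03) : e 2 * (e 1 * x) = -(e 1 * (e 2 * x)) := by
  rw [← mul_assoc, w21, neg_mul, mul_assoc]

lemma I3_mul_I3 : I3 * I3 = 1 := by
  simp only [I3, mul_assoc, mul_neg, neg_mul, neg_neg, s0, s1, s2, s0', s1', s2',
    w10, w20, w21, w10', w20', w21', mul_one, one_mul]

lemma I3e0 : I3 * e 0 = e 0 * I3 := by
  simp only [I3, mul_assoc, mul_neg, neg_mul, neg_neg, s0, s1, s2, s0', s1', s2',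
    w10, w20, w21, w10', w20', w21', mul_one, one_mul]
lemma I3e1 : I3 * e 1 = e 1 * I3 := by
  simp only [I3, mul_assoc, mul_neg, neg_mul, neg_neg, s0, s1, s2, s0', s1', s2',
    w10, w20, w21, w10', w20', w21', mul_one, one_mul]
lemma I3e2 : I3 * e 2 = e 2 * I3 := by
  simp only [I3, mul_assoc, mul_neg, neg_mul, neg_neg, s0, s1, s2, s0', s1', s2',
    w10, w20, w21, w10', w20', w21', mul_one, one_mul]
lemma I3b01 : I3 * (e 0 * e 1) = (e 0 * e 1) * I3 := by
  rw [← mul_assoc, I3e0, mul_assoc, I3e1, ← mul_assoc]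
lemma I3b02 : I3 * (e 0 * e 2) = (e 0 * e 2) * I3 := by
  rw [← mul_assoc, I3e0, mul_assoc, I3e2, ← mul_assoc]
lemma I3b12 : I3 * (e 1 * e 2) = (e 1 * e 2) * I3 := by
  rw [← mul_assoc, I3e1, mul_assoc, I3e2, ← mul_assoc]

lemma sq_w (va bA : Cl03) (a1 a2 a3 a12 a13 a23 : ℝ)
    (hva : va = a1 • e 0 + a2 • e 1 + a3 • e 2)
    (hbA : bA = a12 • (e 0 * e 1) + a13 • (e 0 * e 2) + a23 • (e 1 * e 2)) :
    (va + bA) * (va + bA) =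
      (-(a1^2 + a2^2 + a3^2 + a12^2 + a13^2 + a23^2)) • 1
        + (2*(a3*a12 - a2*a13 + a1*a23)) • I3 := by
  subst hva hbA
  simp only [I3, mul_add, add_mul, smul_mul_assoc, mul_smul_comm, mul_assoc,
    mul_neg, neg_mul, neg_neg, smul_neg, s0, s1, s2, s0', s1', s2',
    w10, w20, w21, w10', w20', w21', mul_one, one_mul]
  module

/-- Product of two "diagonal" elements in the split basis `uP, uM`. -/
lemma combo_mul (uP uM : Cl03) (h1 : uP * uP = uP + uP) (h2 : uM * uM = uM + uM)
    (h3 : uP * uM = 0) (h4 : uM * uP = 0) (p q r s : ℝ) :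
    (p • uP + q • uM) * (r • uP + s • uM) = (2*p*r) • uP + (2*q*s) • uM := by
  rw [add_mul, mul_add, mul_add, smul_mul_assoc, smul_mul_assoc, smul_mul_assoc,
    smul_mul_assoc, mul_smul_comm, mul_smul_comm, mul_smul_comm, mul_smul_comm,
    h1, h2, h3, h4]
  match_scalars <;> ring

/-- the free multivector `F` satisfies `exp F = 1` and commutes with `A`. -/
theorem free_multivector_Cl03
    (a0 a1 a2 a3 a12 a13 a23 a123 ap am : ℝ) (c1p c1m : ℤ)
    (va bA A F : Cl03)
    (hva : va = a1 • e 0 + a2 • e 1 + a3 • e 2)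
    (hbA : bA = a12 • (e 0 * e 1) + a13 • (e 0 * e 2) + a23 • (e 1 * e 2))
    (hA : A = algebraMap ℝ Cl03 a0 + va + bA + a123 • I3)
    (hap : ap = Real.sqrt ((a3 - a12) ^ 2 + (a2 + a13) ^ 2 + (a1 - a23) ^ 2))
    (ham : am = Real.sqrt ((a3 + a12) ^ 2 + (a2 - a13) ^ 2 + (a1 + a23) ^ 2))
    (happos : 0 < ap) (hampos : 0 < am)
    (hF : F = (π * c1p / ap) • ((1 + I3) * (va + bA)) +
      (π * c1m / am) • ((1 - I3) * (va + bA))) :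
    expCl F = 1 ∧ F * A = A * F := by
  have hapne : ap ≠ 0 := ne_of_gt happos
  have hamne : am ≠ 0 := ne_of_gt hampos
  have hap2 : ap^2 = (a1^2 + a2^2 + a3^2 + a12^2 + a13^2 + a23^2)
      - 2*(a3*a12 - a2*a13 + a1*a23) := by
    rw [hap, Real.sq_sqrt (by positivity)]; ring
  have ham2 : am^2 = (a1^2 + a2^2 + a3^2 + a12^2 + a13^2 + a23^2)
      + 2*(a3*a12 - a2*a13 + a1*a23) := by
    rw [ham, Real.sq_sqrt (by positivity)]; ring
  obtain ⟨W, hW⟩ : ∃ W, W = va + bA := ⟨_, rfl⟩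
  obtain ⟨uP, hUP⟩ : ∃ u, u = (1 : Cl03) + I3 := ⟨_, rfl⟩
  obtain ⟨uM, hUM⟩ : ∃ u, u = (1 : Cl03) - I3 := ⟨_, rfl⟩
  have hF' : F = (π * c1p / ap) • (uP * W) + (π * c1m / am) • (uM * W) := by
    rw [hF, hW, hUP, hUM]
  have hIW : I3 * W = W * I3 := by
    rw [hW, hva, hbA]
    simp only [mul_add, add_mul, mul_smul_comm, smul_mul_assoc,
      I3e0, I3e1, I3e2, I3b01, I3b02, I3b12]
  have hWW : W * W = (-(a1^2 + a2^2 + a3^2 + a12^2 + a13^2 + a23^2)) • 1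
      + (2*(a3*a12 - a2*a13 + a1*a23)) • I3 := by
    rw [hW]; exact sq_w va bA a1 a2 a3 a12 a13 a23 hva hbA
  -- structural facts about uP, uM
  have h1 : uP * uP = uP + uP := by
    rw [hUP]; linear_combination (norm := noncomm_ring) I3_mul_I3
  have h2 : uM * uM = uM + uM := by
    rw [hUM]; linear_combination (norm := noncomm_ring) I3_mul_I3
  have h3 : uP * uM = 0 := by
    rw [hUP, hUM]; linear_combination (norm := noncomm_ring) -I3_mul_I3
  have h4 : uM * uP = 0 := by
    rw [hUP, hUM]; linear_combination (norm := noncomm_ring) -I3_mul_I3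
  have hPI3 : uP * I3 = uP := by
    rw [hUP]; linear_combination (norm := noncomm_ring) I3_mul_I3
  have hMI3 : uM * I3 = -uM := by
    rw [hUM]; linear_combination (norm := noncomm_ring) -I3_mul_I3
  have h5 : uP * W = W * uP := by
    rw [hUP, add_mul, mul_add, one_mul, mul_one, hIW]
  have h6 : uM * W = W * uM := by
    rw [hUM, sub_mul, mul_sub, one_mul, mul_one, hIW]
  have h7 : uP * (W * W) = (-(ap^2)) • uP := by
    rw [hWW, mul_add, mul_smul_comm, mul_smul_comm, mul_one, hPI3, ← add_smul]
    congr 1; rw [hap2]; ring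
  have h8 : uM * (W * W) = (-(am^2)) • uM := by
    rw [hWW, mul_add, mul_smul_comm, mul_smul_comm, mul_one, hMI3, smul_neg, ← sub_eq_add_neg,
      ← sub_smul]
    congr 1; rw [ham2]; ring
  -- products of the two "nilpotent-free" blocks
  have hPP : (uP * W) * (uP * W) = (-(2*ap^2)) • uP := by
    calc (uP * W) * (uP * W) = uP * ((W * uP) * W) := by rw [mul_assoc, ← mul_assoc W]
    _ = uP * (uP * (W * W)) := by rw [← h5, mul_assoc]
    _ = (-(ap^2)) • (uP * uP) := by rw [h7, mul_smul_comm]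
    _ = (-(2*ap^2)) • uP := by rw [h1]; match_scalars <;> ring
  have hMM : (uM * W) * (uM * W) = (-(2*am^2)) • uM := by
    calc (uM * W) * (uM * W) = uM * ((W * uM) * W) := by rw [mul_assoc, ← mul_assoc W]
    _ = uM * (uM * (W * W)) := by rw [← h6, mul_assoc]
    _ = (-(am^2)) • (uM * uM) := by rw [h8, mul_smul_comm]
    _ = (-(2*am^2)) • uM := by rw [h2]; match_scalars <;> ring
  have hPM : (uP * W) * (uM * W) = 0 := by
    have key : (uP * W) * (uM * W) = uP * (W * uM) * W := by noncomm_ring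
    rw [key, ← h6, show uP * (uM * W) * W = (uP * uM) * (W * W) by noncomm_ring, h3, zero_mul]
  have hMP : (uM * W) * (uP * W) = 0 := by
    have key : (uM * W) * (uP * W) = uM * (W * uP) * W := by noncomm_ring
    rw [key, ← h5, show uM * (uP * W) * W = (uM * uP) * (W * W) by noncomm_ring, h4, zero_mul]
  -- the square of F
  obtain ⟨zp, hzp⟩ : ∃ z, z = -((2*π*(c1p:ℝ))^2) := ⟨_, rfl⟩
  obtain ⟨zm, hzm⟩ : ∃ z, z = -((2*π*(c1m:ℝ))^2) := ⟨_, rfl⟩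
  have hF2 : F * F = (zp/2) • uP + (zm/2) • uM := by
    rw [hF', add_mul, mul_add, mul_add, smul_mul_assoc, smul_mul_assoc, smul_mul_assoc,
      smul_mul_assoc, mul_smul_comm, mul_smul_comm, mul_smul_comm, mul_smul_comm,
      hPP, hMM, hPM, hMP, smul_zero, smul_zero, smul_zero, add_zero, zero_add,
      smul_smul, smul_smul, smul_smul, smul_smul]
    rw [hzp, hzm]
    match_scalars <;> field_simp
  -- even powers
  have hpow : ∀ k : ℕ, F^(2*k) = (zp^k/2) • uP + (zm^k/2) • uM := by
    intro k
    induction k with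
    | zero =>
      simp only [Nat.mul_zero, pow_zero, pow_zero]
      rw [hUP, hUM]; module
    | succ n ih =>
      have h2n : 2*(n+1) = 2*n + 2 := by ring
      rw [h2n, pow_add, ih, pow_two, hF2, combo_mul uP uM h1 h2 h3 h4]
      match_scalars <;> ring
  have hpowodd : ∀ k : ℕ, F^(2*k+1) =
      (zp^k * (π * c1p / ap)) • (uP * W) + (zm^k * (π * c1m / am)) • (uM * W) := by
    intro k
    rw [pow_succ, hpow k, hF']
    simp only [smul_mul_assoc, mul_smul_comm, ← mul_assoc, add_mul, mul_add, smul_add,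
      h1, h2, h3, h4, zero_mul, smul_zero, zero_add, add_zero, smul_smul]
    match_scalars <;> ring
  -- trig facts
  have hcosp : Real.cos (2*π*(c1p:ℝ)) = 1 := by
    rw [show (2*π*(c1p:ℝ)) = (c1p:ℝ) * (2*π) by ring]
    exact Real.cos_int_mul_two_pi c1p
  have hcosm : Real.cos (2*π*(c1m:ℝ)) = 1 := by
    rw [show (2*π*(c1m:ℝ)) = (c1m:ℝ) * (2*π) by ring]
    exact Real.cos_int_mul_two_pi c1m
  have hsinp : Real.sin (2*π*(c1p:ℝ)) = 0 := by
    have := Real.sin_int_mul_pi (2*c1p)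
    push_cast at this
    rw [show (2*π*(c1p:ℝ)) = 2*(c1p:ℝ)*π by ring]
    exact this
  have hsinm : Real.sin (2*π*(c1m:ℝ)) = 0 := by
    have := Real.sin_int_mul_pi (2*c1m)
    push_cast at this
    rw [show (2*π*(c1m:ℝ)) = 2*(c1m:ℝ)*π by ring]
    exact this
  have hzppow : ∀ k : ℕ, zp^k = (-1:ℝ)^k * (2*π*(c1p:ℝ))^(2*k) := by
    intro k; rw [hzp, neg_pow, pow_mul]
  have hzmpow : ∀ k : ℕ, zm^k = (-1:ℝ)^k * (2*π*(c1m:ℝ))^(2*k) := by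
    intro k; rw [hzm, neg_pow, pow_mul]
  -- coefficient sums
  have hcp : HasSum (fun k : ℕ => (((2*k).factorial : ℝ))⁻¹ * (zp^k/2)) (1/2) := by
    have h := (Real.hasSum_cos (2*π*(c1p:ℝ))).mul_right (1/2)
    rw [hcosp, one_mul] at h
    have hfun : (fun k : ℕ => (-1:ℝ)^k * (2*π*(c1p:ℝ))^(2*k) / ((2*k).factorial) * (1/2))
        = fun k : ℕ => (((2*k).factorial : ℝ))⁻¹ * (zp^k/2) :=
      funext fun k => by rw [hzppow k]; ring
    rwa [hfun] at h
  have hcm : HasSum (fun k : ℕ => (((2*k).factorial : ℝ))⁻¹ * (zm^k/2)) (1/2) := by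
    have h := (Real.hasSum_cos (2*π*(c1m:ℝ))).mul_right (1/2)
    rw [hcosm, one_mul] at h
    have hfun : (fun k : ℕ => (-1:ℝ)^k * (2*π*(c1m:ℝ))^(2*k) / ((2*k).factorial) * (1/2))
        = fun k : ℕ => (((2*k).factorial : ℝ))⁻¹ * (zm^k/2) :=
      funext fun k => by rw [hzmpow k]; ring
    rwa [hfun] at h
  have hop : HasSum (fun k : ℕ => (((2*k+1).factorial : ℝ))⁻¹ * (zp^k * (π * c1p / ap))) 0 := by
    have h := (Real.hasSum_sin (2*π*(c1p:ℝ))).mul_right (1/(2*ap))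
    rw [hsinp, zero_mul] at h
    have hfun : (fun k : ℕ => (-1:ℝ)^k * (2*π*(c1p:ℝ))^(2*k+1) / ((2*k+1).factorial) * (1/(2*ap)))
        = fun k : ℕ => (((2*k+1).factorial : ℝ))⁻¹ * (zp^k * (π * c1p / ap)) :=
      funext fun k => by rw [hzppow k, pow_succ]; field_simp
    rwa [hfun] at h
  have hom : HasSum (fun k : ℕ => (((2*k+1).factorial : ℝ))⁻¹ * (zm^k * (π * c1m / am))) 0 := by
    have h := (Real.hasSum_sin (2*π*(c1m:ℝ))).mul_right (1/(2*am))
    rw [hsinm, zero_mul] at h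
    have hfun : (fun k : ℕ => (-1:ℝ)^k * (2*π*(c1m:ℝ))^(2*k+1) / ((2*k+1).factorial) * (1/(2*am)))
        = fun k : ℕ => (((2*k+1).factorial : ℝ))⁻¹ * (zm^k * (π * c1m / am)) :=
      funext fun k => by rw [hzmpow k, pow_succ]; field_simp
    rwa [hfun] at h
  -- sums in Cl03
  have hEven : HasSum (fun k : ℕ => (((2*k).factorial : ℝ))⁻¹ • F^(2*k)) 1 := by
    have h := (hcp.smul_const uP).add (hcm.smul_const uM)
    have e1 : (1/2 : ℝ) • uP + (1/2 : ℝ) • uM = 1 := by rw [hUP, hUM]; module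
    rw [e1] at h
    have hfun : (fun k : ℕ => (((2*k).factorial : ℝ))⁻¹ • F^(2*k))
        = fun k : ℕ => ((((2*k).factorial : ℝ))⁻¹ * (zp^k/2)) • uP
            + ((((2*k).factorial : ℝ))⁻¹ * (zm^k/2)) • uM :=
      funext fun k => by rw [hpow k, smul_add, smul_smul, smul_smul]
    rwa [hfun]
  have hOdd : HasSum (fun k : ℕ => (((2*k+1).factorial : ℝ))⁻¹ • F^(2*k+1)) 0 := by
    have h := (hop.smul_const (uP * W)).add (hom.smul_const (uM * W))
    rw [zero_smul, zero_smul, add_zero] at h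
    have hfun : (fun k : ℕ => (((2*k+1).factorial : ℝ))⁻¹ • F^(2*k+1))
        = fun k : ℕ => ((((2*k+1).factorial : ℝ))⁻¹ * (zp^k * (π * c1p / ap))) • (uP * W)
            + ((((2*k+1).factorial : ℝ))⁻¹ * (zm^k * (π * c1m / am))) • (uM * W) :=
      funext fun k => by rw [hpowodd k, smul_add, smul_smul, smul_smul]
    rwa [hfun]
  have hTot : HasSum (fun n : ℕ => ((n.factorial : ℝ))⁻¹ • F^n) 1 := by
    have h := HasSum.even_add_odd (f := fun n : ℕ => ((n.factorial : ℝ))⁻¹ • F^n) hEven hOdd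
    rwa [add_zero] at h
  constructor
  · rw [expCl]; exact hTot.tsum_eq
  · -- commutation
    have hWF : W * F = F * W := by
      rw [hF', mul_add, add_mul, mul_smul_comm, mul_smul_comm, smul_mul_assoc, smul_mul_assoc]
      rw [← mul_assoc, ← h5, ← mul_assoc, ← h6, mul_assoc, mul_assoc]
    have hIF : I3 * F = F * I3 := by
      rw [hF', mul_add, add_mul, mul_smul_comm, mul_smul_comm, smul_mul_assoc, smul_mul_assoc]
      have cP : I3 * uP = uP * I3 := by rw [hUP]; noncomm_ring
      have cM : I3 * uM = uM * I3 := by rw [hUM]; noncomm_ring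
      have eP : I3 * (uP * W) = (uP * W) * I3 := by
        rw [← mul_assoc, cP, mul_assoc, hIW, ← mul_assoc]
      have eM : I3 * (uM * W) = (uM * W) * I3 := by
        rw [← mul_assoc, cM, mul_assoc, hIW, ← mul_assoc]
      rw [eP, eM]
    have hc0 : F * algebraMap ℝ Cl03 a0 = algebraMap ℝ Cl03 a0 * F :=
      (Algebra.commutes a0 F).symm
    have hc1 : F * (va + bA) = (va + bA) * F := by rw [← hW]; exact hWF.symm
    have hc2 : F * (a123 • I3) = (a123 • I3) * F := by
      rw [mul_smul_comm, smul_mul_assoc, hIF]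
    calc F * A = F * algebraMap ℝ Cl03 a0 + (F * (va + bA) + F * (a123 • I3)) := by
          rw [hA]; noncomm_ring
    _ = algebraMap ℝ Cl03 a0 * F + ((va + bA) * F + (a123 • I3) * F) := by
          rw [hc0, hc1, hc2]
    _ = A * F := by rw [hA]; noncomm_ring
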